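/- Let V = V_I × {0} ⊂ H^n with V_I isotropic, and let y = (z,t) ∈ H^n. Then ‖P_V(y)^{-1}·y‖^4 ≤ |π_{V_I^⊥}(z)|^4 + 32 t² + 8 |π_{V_I}(z)|² |π_{V_I^⊥}(z)|², where P_V(z,t) = (π_{V_I}(z), 0). -/

import Mathlib

open scoped BigOperators
open scoped RealInnerProductSpace

noncomputable section

/-- Points of the Heisenberg group ℍⁿ : pairs (z,t) with z ∈ ℝ^{2n}, t ∈ ℝ. -/
abbrev Hpt (n : ℕ) := (EuclideanSpace ℝ (Fin (2 * n))) × ℝ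

/-- The symplectic-type form ω(z,z') = (1/2) ∑ (z_i z'_{n+i} − z_{n+i} z'_i). -/
def omegaH (n : ℕ) (z z' : EuclideanSpace ℝ (Fin (2 * n))) : ℝ :=
  (1 / 2) * ∑ i : Fin n,
    (z ⟨i.1, by have := i.isLt; omega⟩ * z' ⟨n + i.1, by have := i.isLt; omega⟩ -
      z ⟨n + i.1, by have := i.isLt; omega⟩ * z' ⟨i.1, by have := i.isLt; omega⟩)

/-- Heisenberg group multiplication. -/
def hMul {n : ℕ} (x y : Hpt n) : Hpt n :=
  (x.1 + y.1, x.2 + y.2 + omegaH n x.1 y.1)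

/-- Heisenberg group inverse. -/
def hInv {n : ℕ} (x : Hpt n) : Hpt n := (-x.1, -x.2)

/-- Korányi norm ‖(z,t)‖ = (|z|⁴ + 16 t²)^{1/4}. -/
def kNorm {n : ℕ} (x : Hpt n) : ℝ := (‖x.1‖ ^ 4 + 16 * x.2 ^ 2) ^ ((1 : ℝ) / 4)

/-- Korányi distance d(x,y) = ‖y⁻¹ · x‖. -/
def kDist {n : ℕ} (x y : Hpt n) : ℝ := kNorm (hMul (hInv y) x)

/-- A subspace of ℝ^{2n} is isotropic if ω vanishes on it. -/
def IsIsotropic (n : ℕ) (K : Submodule ℝ (EuclideanSpace ℝ (Fin (2 * n)))) : Prop :=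
  ∀ z ∈ K, ∀ z' ∈ K, omegaH n z z' = 0

/-- Horizontal projection onto the horizontal subgroup V = K × {0}. -/
def PV {n : ℕ} (K : Submodule ℝ (EuclideanSpace ℝ (Fin (2 * n)))) (x : Hpt n) : Hpt n :=
  ((Submodule.orthogonalProjectionOnto K x.1 : EuclideanSpace ℝ (Fin (2 * n))), 0)

/-- Complementary vertical projection P_W(y) = (P_V y)⁻¹ · y. -/
def PW {n : ℕ} (K : Submodule ℝ (EuclideanSpace ℝ (Fin (2 * n)))) (x : Hpt n) : Hpt n :=
  hMul (hInv (PV K x)) x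

/-- Membership in the horizontal subgroup V = K × {0}. -/
def MemV {n : ℕ} (K : Submodule ℝ (EuclideanSpace ℝ (Fin (2 * n)))) (x : Hpt n) : Prop :=
  x.1 ∈ K ∧ x.2 = 0




def Jv (n : ℕ) (z' : EuclideanSpace ℝ (Fin (2 * n))) : EuclideanSpace ℝ (Fin (2 * n)) :=
  WithLp.toLp 2 (fun j : Fin (2 * n) => if h : (j : ℕ) < n then z' ⟨n + (j : ℕ), by omega⟩
    else -z' ⟨(j : ℕ) - n, by have := j.isLt; omega⟩)

lemma Jv_lo (n : ℕ) (z' : EuclideanSpace ℝ (Fin (2 * n))) (i : ℕ) (h : i < n) :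
    Jv n z' ⟨i, by omega⟩ = z' ⟨n + i, by omega⟩ := dif_pos h

lemma Jv_hi (n : ℕ) (z' : EuclideanSpace ℝ (Fin (2 * n))) (i : ℕ) (h : i < n) :
    Jv n z' ⟨n + i, by omega⟩ = -z' ⟨i, by omega⟩ := by
  show dite _ _ _ = _
  rw [dif_neg (by simp)]
  congr 1
  apply congrArg
  apply Fin.ext
  simp

lemma sum_split (n : ℕ) (F : Fin (2 * n) → ℝ) :
    ∑ j : Fin (2 * n), F j =
      (∑ i : Fin n, F ⟨i.1, by have := i.isLt; omega⟩) +
      ∑ i : Fin n, F ⟨n + i.1, by have := i.isLt; omega⟩ := by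
  rw [← Equiv.sum_comp (finSumFinEquiv.trans (finCongr (two_mul n).symm)) F,
    Fintype.sum_sum_type]
  congr 1 <;> apply Finset.sum_congr rfl <;> intro i _ <;>
    · congr 1
      simp [Fin.ext_iff]

lemma inner_Jv (n : ℕ) (z z' : EuclideanSpace ℝ (Fin (2 * n))) :
    ⟪z, Jv n z'⟫ = 2 * omegaH n z z' := by
  rw [PiLp.inner_apply]
  simp only [RCLike.inner_apply, conj_trivial]
  rw [sum_split n (fun j => Jv n z' j * z j)]
  simp only [omegaH]
  rw [Finset.mul_sum, Finset.mul_sum, ← Finset.sum_add_distrib]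
  apply Finset.sum_congr rfl
  intro i _
  rw [Jv_lo n z' i.1 i.isLt, Jv_hi n z' i.1 i.isLt]
  ring

lemma norm_Jv (n : ℕ) (z' : EuclideanSpace ℝ (Fin (2 * n))) : ‖Jv n z'‖ = ‖z'‖ := by
  have h : ∀ x : EuclideanSpace ℝ (Fin (2*n)), ‖x‖ = Real.sqrt (∑ j, x j ^ 2) := by
    intro x
    rw [EuclideanSpace.norm_eq]
    congr 1; apply Finset.sum_congr rfl; intro j _; rw [Real.norm_eq_abs, sq_abs]
  rw [h, h]
  congr 1
  rw [sum_split n (fun j => Jv n z' j ^ 2), sum_split n (fun j => z' j ^ 2), add_comm]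
  congr 1
  · apply Finset.sum_congr rfl; intro i _
    rw [Jv_hi n z' i.1 i.isLt, neg_sq]
  · apply Finset.sum_congr rfl; intro i _
    rw [Jv_lo n z' i.1 i.isLt]

lemma omega_bound (n : ℕ) (z z' : EuclideanSpace ℝ (Fin (2 * n))) :
    |2 * omegaH n z z'| ≤ ‖z‖ * ‖z'‖ := by
  rw [← inner_Jv, ← norm_Jv n z']
  exact abs_real_inner_le_norm z (Jv n z')

lemma omega_key (n : ℕ) (p q : EuclideanSpace ℝ (Fin (2 * n))) :
    omegaH n (-p) (p + q) = - omegaH n p q := by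
  simp only [omegaH]
  rw [← mul_neg, ← Finset.sum_neg_distrib]
  apply congrArg
  apply Finset.sum_congr rfl
  intro i _
  simp only [PiLp.neg_apply, PiLp.add_apply]
  ring


theorem vertical_part_norm_bound (n : ℕ)
    (K : Submodule ℝ (EuclideanSpace ℝ (Fin (2 * n))))
    (hK : IsIsotropic n K) (y : Hpt n) :
    kNorm (hMul (hInv (PV K y)) y) ^ 4 ≤
      ‖y.1 - (Submodule.orthogonalProjectionOnto K y.1 : EuclideanSpace ℝ (Fin (2 * n)))‖ ^ 4 +
        32 * y.2 ^ 2 +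
        8 * ‖(Submodule.orthogonalProjectionOnto K y.1 : EuclideanSpace ℝ (Fin (2 * n)))‖ ^ 2 *
          ‖y.1 - (Submodule.orthogonalProjectionOnto K y.1 : EuclideanSpace ℝ (Fin (2 * n)))‖ ^ 2 := by
  set p : EuclideanSpace ℝ (Fin (2 * n)) :=
    (Submodule.orthogonalProjectionOnto K y.1 : EuclideanSpace ℝ (Fin (2 * n))) with hp
  set q : EuclideanSpace ℝ (Fin (2 * n)) := y.1 - p with hq
  set w : ℝ := omegaH n p q with hwdef
  have hmul : hMul (hInv (PV K y)) y = (q, y.2 - w) := by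
    refine Prod.ext ?_ ?_
    · show -p + y.1 = q
      rw [hq]; abel
    · show -0 + y.2 + omegaH n (-p) y.1 = y.2 - w
      have hy1 : y.1 = p + q := by rw [hq]; abel
      rw [hy1, omega_key n p q]
      ring
  rw [hmul]
  have hA : (0:ℝ) ≤ ‖q‖ ^ 4 + 16 * (y.2 - w) ^ 2 := by positivity
  have hk : kNorm (q, y.2 - w) ^ 4 = ‖q‖ ^ 4 + 16 * (y.2 - w) ^ 2 := by
    rw [kNorm]
    rw [← Real.rpow_natCast (_ ^ ((1:ℝ)/4)) 4, ← Real.rpow_mul hA]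
    norm_num
  rw [hk]
  have hw : |2 * w| ≤ ‖p‖ * ‖q‖ := omega_bound n p q
  have h2 : |2 * w| * |2 * w| ≤ (‖p‖ * ‖q‖) * (‖p‖ * ‖q‖) :=
    mul_self_le_mul_self (abs_nonneg _) hw
  rw [abs_mul_abs_self] at h2
  nlinarith [sq_nonneg (y.2 + w)]
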